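/- arXiv:2505.17878 — 2 statements merged into one kernel-verified Lean document; each statement's English description precedes it below -/
import Mathlib

section
/- There exists a sequence (f_n)_{n≥2} of meromorphic functions on the unit disk 𝔻 such that S_2(f_n)(z) ≠ 0 for all z ∈ 𝔻 and all n, yet the sequence (f_n''/f_n')_n is not normal at the point 1/2. Specifically, the functions f_n(z) = ((2z)^n − 1)^{−1} satisfy S_2(f_n)(z) = (1 − n²)/(2z²) (which never takes the value 0 for n ≥ 2), each f_n has a simple pole at 1/2, f_n''(z_n) = 0 for z_n = (1/2)·((n−1)/(n+1))^{1/n}·e^{iπ/n}, and z_n → 1/2; hence (f_n''/f_n')_n is not normal at 1/2. -/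
open Complex Filter Set Metric Topology

noncomputable section

/-- The open unit disk `𝔻`. -/
def unitDisk : Set ℂ := Metric.ball (0 : ℂ) 1

/-- The logarithmic derivative of `f'`, i.e. `f''/f'`. -/
def ldd (f : ℂ → ℂ) : ℂ → ℂ := fun z => deriv (deriv f) z / deriv f z

/-- `SRec n f m` is the generalized Schwarzian `S_{m+2,n}(f)`. -/
def SRec (n : ℕ) (f : ℂ → ℂ) : ℕ → ℂ → ℂ
  | 0 => ldd f
  | m + 1 => fun z => deriv (SRec n f m) z - (1 / (n : ℂ)) * ldd f z * SRec n f m z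

/-- `SGen n k f` is `S_{k,n}(f)` (for `k ≥ 2`). -/
def SGen (n k : ℕ) (f : ℂ → ℂ) : ℂ → ℂ := SRec n f (k - 2)

/-- The generalized Schwarzian derivative of order `k`: `S_k(f) = S_{k+1,k}(f)`. -/
def Sk (k : ℕ) (f : ℂ → ℂ) : ℂ → ℂ := SGen k (k + 1) f

/-- `f` is a non-constant meromorphic function on `U`: near no point of `U`
is `f` eventually equal to a constant. -/
def NonConstOn (f : ℂ → ℂ) (U : Set ℂ) : Prop :=
  ¬ ∃ c : ℂ, ∃ z ∈ U, ∀ᶠ w in 𝓝[≠] z, f w = c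

/-- `E` has no accumulation point in `U`. -/
def NoAccIn (E U : Set ℂ) : Prop := ∀ z ∈ U, ¬ AccPt z (𝓟 E)

/-- The family `M_{k,M}`: (non-constant) meromorphic functions on `𝔻` whose generalized
Schwarzian derivative `S_k(f)` is holomorphic on `𝔻` with `‖S_k(f)‖_∞ ≤ M`, i.e. it
coincides (away from a set without accumulation points in `𝔻`) with a function `g`
holomorphic on `𝔻` and bounded by `M`. -/
def MFam (k : ℕ) (M : ℝ) : Set (ℂ → ℂ) :=
  {f | MeromorphicOn f unitDisk ∧ NonConstOn f unitDisk ∧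
    ∃ g : ℂ → ℂ, AnalyticOnNhd ℂ g unitDisk ∧ (∀ z ∈ unitDisk, ‖g z‖ ≤ M) ∧
      NoAccIn {w ∈ unitDisk | Sk k f w ≠ g w} unitDisk}

/-- The family `H_{k,M} = M_{k,M} ∩ H(𝔻)`. -/
def HFam (k : ℕ) (M : ℝ) : Set (ℂ → ℂ) :=
  {f ∈ MFam k M | AnalyticOnNhd ℂ f unitDisk}

/-- The chordal (spherical) distance on the Riemann sphere `ℂ ∪ {∞}`. -/
def sphDist (x y : OnePoint ℂ) : ℝ :=
  Option.elim x (Option.elim y 0 fun w => 1 / Real.sqrt (1 + ‖w‖ ^ 2))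
    fun z =>
      Option.elim y (1 / Real.sqrt (1 + ‖z‖ ^ 2)) fun w =>
        ‖z - w‖ / (Real.sqrt (1 + ‖z‖ ^ 2) * Real.sqrt (1 + ‖w‖ ^ 2))

/-- Locally uniform convergence on `U` with respect to the spherical metric. -/
def TendstoLocUnifSph (F : ℕ → ℂ → ℂ) (g : ℂ → OnePoint ℂ) (U : Set ℂ) : Prop :=
  ∀ ε > (0 : ℝ), ∀ x ∈ U, ∃ t ∈ 𝓝[U] x,
    ∀ᶠ n in atTop, ∀ y ∈ t, sphDist (F n y : OnePoint ℂ) (g y) < ε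

/-- A family of (meromorphic) functions is normal on `U` if every sequence has a
subsequence converging locally uniformly on `U` w.r.t. the spherical metric. -/
def NormalOn (𝓕 : Set (ℂ → ℂ)) (U : Set ℂ) : Prop :=
  ∀ F : ℕ → ℂ → ℂ, (∀ n, F n ∈ 𝓕) →
    ∃ φ : ℕ → ℕ, StrictMono φ ∧
      ∃ g : ℂ → OnePoint ℂ, TendstoLocUnifSph (fun n => F (φ n)) g U

/-- A family is quasi-normal on `U` if every sequence has a subsequence converging
locally uniformly (spherically) off some exceptional set `E ⊆ U` without
accumulation points in `U`. -/
def QuasiNormalOn (𝓕 : Set (ℂ → ℂ)) (U : Set ℂ) : Prop :=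
  ∀ F : ℕ → ℂ → ℂ, (∀ n, F n ∈ 𝓕) →
    ∃ φ : ℕ → ℕ, StrictMono φ ∧ ∃ E : Set ℂ, E ⊆ U ∧ NoAccIn E U ∧
      ∃ g : ℂ → OnePoint ℂ, TendstoLocUnifSph (fun n => F (φ n)) g (U \ E)

/-- A family is locally uniformly bounded on `U`. -/
def LocUnifBddOn (𝓕 : Set (ℂ → ℂ)) (U : Set ℂ) : Prop :=
  ∀ x ∈ U, ∃ t ∈ 𝓝[U] x, ∃ C : ℝ, ∀ f ∈ 𝓕, ∀ y ∈ t, ‖f y‖ ≤ C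

/-- The functions `f_n(z) = ((2z)^n - 1)⁻¹`. -/
def fseq (n : ℕ) : ℂ → ℂ := fun z => ((2 * z) ^ n - 1)⁻¹

/-- The points `z_n = (1/2)·((n-1)/(n+1))^{1/n}·e^{iπ/n}`. -/
def zseq (n : ℕ) : ℂ :=
  (1 / 2 : ℂ) * (((n : ℂ) - 1) / ((n : ℂ) + 1)) ^ ((1 : ℂ) / (n : ℂ)) *
    Complex.exp (Real.pi * Complex.I / (n : ℂ))
namespace SchwAux

lemma hasDerivAt_two_mul (z : ℂ) : HasDerivAt (fun w : ℂ => 2 * w) 2 z := by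
  simpa using (hasDerivAt_id z).const_mul (2 : ℂ)

lemma hasDerivAt_p (m : ℕ) (z : ℂ) :
    HasDerivAt (fun w : ℂ => (2 * w) ^ (m + 2) - 1)
      (((m : ℂ) + 2) * (2 * z) ^ (m + 1) * 2) z := by
  have h := ((hasDerivAt_two_mul z).pow (m + 2)).sub_const 1
  norm_num [-hasDerivAt_sub_const_iff] at h
  convert h using 1
  all_goals (push_cast; ring)

lemma hasDerivAt_fseq {m : ℕ} {z : ℂ} (hp : (2 * z) ^ (m + 2) - 1 ≠ 0) :
    HasDerivAt (fseq (m + 2))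
      (-(((m : ℂ) + 2) * (2 * z) ^ (m + 1) * 2) / ((2 * z) ^ (m + 2) - 1) ^ 2) z :=
  (hasDerivAt_p m z).inv hp

/-- Explicit first derivative of `fseq (m+2)`. -/
def df (m : ℕ) : ℂ → ℂ :=
  fun w => -(((m : ℂ) + 2) * (2 * w) ^ (m + 1) * 2) / ((2 * w) ^ (m + 2) - 1) ^ 2

lemma deriv_fseq {m : ℕ} {z : ℂ} (hp : (2 * z) ^ (m + 2) - 1 ≠ 0) :
    deriv (fseq (m + 2)) z = df m z :=
  (hasDerivAt_fseq hp).deriv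

lemma isOpen_O (n : ℕ) : IsOpen {w : ℂ | (2 * w) ^ n - 1 ≠ 0} := by
  have : Continuous fun w : ℂ => (2 * w) ^ n - 1 := by continuity
  exact isOpen_ne.preimage this

lemma deriv2_fseq {m : ℕ} {z : ℂ} (hp : (2 * z) ^ (m + 2) - 1 ≠ 0) :
    deriv (deriv (fseq (m + 2))) z = deriv (df m) z := by
  apply Filter.EventuallyEq.deriv_eq
  filter_upwards [(isOpen_O (m + 2)).mem_nhds hp] with w hw using deriv_fseq hw

/-- Explicit second derivative of `fseq (m+2)` (unreduced quotient-rule form). -/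
def d2f (m : ℕ) (z : ℂ) : ℂ :=
  ((-(((m : ℂ) + 2) * (((m : ℂ) + 1) * (2 * z) ^ m * 2) * 2)) * ((2 * z) ^ (m + 2) - 1) ^ 2 -
      (-(((m : ℂ) + 2) * (2 * z) ^ (m + 1) * 2)) *
        (2 * ((2 * z) ^ (m + 2) - 1) ^ 1 * (((m : ℂ) + 2) * (2 * z) ^ (m + 1) * 2))) /
    (((2 * z) ^ (m + 2) - 1) ^ 2) ^ 2

lemma hasDerivAt_df {m : ℕ} {z : ℂ} (hp : (2 * z) ^ (m + 2) - 1 ≠ 0) :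
    HasDerivAt (df m) (d2f m z) z := by
  have hnum : HasDerivAt (fun w : ℂ => -(((m : ℂ) + 2) * (2 * w) ^ (m + 1) * 2))
      (-(((m : ℂ) + 2) * (((m : ℂ) + 1) * (2 * z) ^ m * 2) * 2)) z := by
    have h := ((((hasDerivAt_two_mul z).fun_pow (m + 1)).const_mul ((m : ℂ) + 2)).mul_const
      (2 : ℂ)).fun_neg
    norm_num at h
    convert h using 1
    all_goals (push_cast; ring)
  have hden : HasDerivAt (fun w : ℂ => ((2 * w) ^ (m + 2) - 1) ^ 2)
      (2 * ((2 * z) ^ (m + 2) - 1) ^ 1 * (((m : ℂ) + 2) * (2 * z) ^ (m + 1) * 2)) z := by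
    have h := (hasDerivAt_p m z).fun_pow 2
    norm_num at h ⊢
    convert h using 1
    all_goals ring
  exact hnum.div hden (pow_ne_zero 2 hp)

lemma deriv2_fseq' {m : ℕ} {z : ℂ} (hp : (2 * z) ^ (m + 2) - 1 ≠ 0) :
    deriv (deriv (fseq (m + 2))) z = d2f m z := by
  rw [deriv2_fseq hp, (hasDerivAt_df hp).deriv]

end SchwAux
namespace SchwAux

/-- The simplified form of `f''/f'` for `f = fseq (m+2)`. -/
def L (m : ℕ) : ℂ → ℂ :=
  fun w => -2 * (((m : ℂ) + 3) * (2 * w) ^ (m + 2) + ((m : ℂ) + 1)) /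
    ((2 * w) * ((2 * w) ^ (m + 2) - 1))

lemma ldd_eq_L {m : ℕ} {z : ℂ} (hp : (2 * z) ^ (m + 2) - 1 ≠ 0) (hz : z ≠ 0) :
    ldd (fseq (m + 2)) z = L m z := by
  have h2z : (2 : ℂ) * z ≠ 0 := by simp [hz]
  have hx : (2 * z) ^ (m + 1) ≠ 0 := pow_ne_zero _ h2z
  have hm2 : ((m : ℂ) + 2) ≠ 0 := by
    have : ((m : ℂ) + 2) = ((m + 2 : ℕ) : ℂ) := by push_cast; ring
    rw [this]
    exact Nat.cast_ne_zero.mpr (by omega)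
  rw [ldd, deriv2_fseq' hp, deriv_fseq hp, d2f, df, L]
  field_simp
  ring

lemma hasDerivAt_L {m : ℕ} {z : ℂ} (hp : (2 * z) ^ (m + 2) - 1 ≠ 0) (hz : z ≠ 0) :
    HasDerivAt (L m)
      ((-2 * (((m : ℂ) + 3) * ((((m : ℂ) + 2)) * (2 * z) ^ (m + 1) * 2)) *
          ((2 * z) * ((2 * z) ^ (m + 2) - 1)) -
        -2 * (((m : ℂ) + 3) * (2 * z) ^ (m + 2) + ((m : ℂ) + 1)) *
          (2 * ((2 * z) ^ (m + 2) - 1) + (2 * z) * (((m : ℂ) + 2) * (2 * z) ^ (m + 1) * 2))) /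
        ((2 * z) * ((2 * z) ^ (m + 2) - 1)) ^ 2) z := by
  have h2z : (2 : ℂ) * z ≠ 0 := by simp [hz]
  have hnum : HasDerivAt
      (fun w : ℂ => -2 * (((m : ℂ) + 3) * (2 * w) ^ (m + 2) + ((m : ℂ) + 1)))
      (-2 * (((m : ℂ) + 3) * ((((m : ℂ) + 2)) * (2 * z) ^ (m + 1) * 2))) z := by
    have h := ((((hasDerivAt_two_mul z).fun_pow (m + 2)).const_mul ((m : ℂ) + 3)).add_const
      ((m : ℂ) + 1)).const_mul (-2 : ℂ)
    refine h.congr_deriv ?_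
    all_goals (norm_num; try push_cast; try ring)
  have hden : HasDerivAt (fun w : ℂ => (2 * w) * ((2 * w) ^ (m + 2) - 1))
      (2 * ((2 * z) ^ (m + 2) - 1) + (2 * z) * (((m : ℂ) + 2) * (2 * z) ^ (m + 1) * 2)) z :=
    (hasDerivAt_two_mul z).mul (hasDerivAt_p m z)
  exact hnum.div hden (mul_ne_zero h2z hp)

lemma deriv_ldd {m : ℕ} {z : ℂ} (hp : (2 * z) ^ (m + 2) - 1 ≠ 0) (hz : z ≠ 0) :
    deriv (ldd (fseq (m + 2))) z =
      ((-2 * (((m : ℂ) + 3) * ((((m : ℂ) + 2)) * (2 * z) ^ (m + 1) * 2)) *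
          ((2 * z) * ((2 * z) ^ (m + 2) - 1)) -
        -2 * (((m : ℂ) + 3) * (2 * z) ^ (m + 2) + ((m : ℂ) + 1)) *
          (2 * ((2 * z) ^ (m + 2) - 1) + (2 * z) * (((m : ℂ) + 2) * (2 * z) ^ (m + 1) * 2))) /
        ((2 * z) * ((2 * z) ^ (m + 2) - 1)) ^ 2) := by
  have hopen : IsOpen ({w : ℂ | (2 * w) ^ (m + 2) - 1 ≠ 0} ∩ {w : ℂ | w ≠ 0}) :=
    (isOpen_O (m + 2)).inter (isOpen_ne)
  have hmem : z ∈ {w : ℂ | (2 * w) ^ (m + 2) - 1 ≠ 0} ∩ {w : ℂ | w ≠ 0} := ⟨hp, hz⟩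
  have heq : ldd (fseq (m + 2)) =ᶠ[nhds z] L m := by
    filter_upwards [hopen.mem_nhds hmem] with w hw using ldd_eq_L hw.1 hw.2
  rw [heq.deriv_eq]
  exact (hasDerivAt_L hp hz).deriv

lemma Sk_eq {m : ℕ} {z : ℂ} (hp : (2 * z) ^ (m + 2) - 1 ≠ 0) (hz : z ≠ 0) :
    Sk 2 (fseq (m + 2)) z = (1 - ((m : ℂ) + 2) ^ 2) / (2 * z ^ 2) := by
  have h2z : (2 : ℂ) * z ≠ 0 := by simp [hz]
  have hstep : Sk 2 (fseq (m + 2)) z =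
      deriv (ldd (fseq (m + 2))) z -
        (1 / ((2 : ℕ) : ℂ)) * ldd (fseq (m + 2)) z * ldd (fseq (m + 2)) z := rfl
  have hD2 : (2 * z) * ((2 * z) ^ (m + 2) - 1) ≠ 0 := mul_ne_zero h2z hp
  have hB : ((2 * z) * ((2 * z) ^ (m + 2) - 1)) ^ 2 ≠ 0 := pow_ne_zero 2 hD2
  have h2 : ((2 : ℕ) : ℂ) ≠ 0 := by norm_num
  have hF : (2 : ℂ) * z ^ 2 ≠ 0 := by simp [hz]
  rw [hstep, deriv_ldd hp hz, ldd_eq_L hp hz, L]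
  rw [div_mul_div_comm, div_mul_div_comm]
  rw [div_sub_div _ _ hB (mul_ne_zero (mul_ne_zero h2 hD2) hD2), div_eq_div_iff
    (mul_ne_zero hB (mul_ne_zero (mul_ne_zero h2 hD2) hD2)) hF]
  push_cast
  ring

end SchwAux
namespace SchwAux

lemma p_ne_of_analytic {m : ℕ} {z : ℂ} (hA : AnalyticAt ℂ (fseq (m + 2)) z) :
    (2 * z) ^ (m + 2) - 1 ≠ 0 := by
  intro h0
  have h2z : (2 : ℂ) * z ≠ 0 := by
    intro h
    rw [h] at h0
    simp at h0
  have hpA : AnalyticAt ℂ (fun w : ℂ => (2 * w) ^ (m + 2) - 1) z := by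
    apply AnalyticAt.sub _ analyticAt_const
    exact ((analyticAt_const.mul analyticAt_id).pow (m + 2))
  have hne : ∀ᶠ w in 𝓝[≠] z, (2 * w) ^ (m + 2) - 1 ≠ 0 := by
    rcases hpA.eventually_eq_zero_or_eventually_ne_zero with h | h
    · exfalso
      have hd : deriv (fun w : ℂ => (2 * w) ^ (m + 2) - 1) z = 0 := by
        have : (fun w : ℂ => (2 * w) ^ (m + 2) - 1) =ᶠ[𝓝 z] (fun _ => (0 : ℂ)) := h
        rw [this.deriv_eq]
        simp
      rw [(hasDerivAt_p m z).deriv] at hd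
      have : ((m : ℂ) + 2) ≠ 0 := by
        have e : ((m : ℂ) + 2) = ((m + 2 : ℕ) : ℂ) := by push_cast; ring
        rw [e]; exact Nat.cast_ne_zero.mpr (by omega)
      simp only [mul_eq_zero] at hd
      rcases hd with (hd | hd) | hd
      · exact this hd
      · exact pow_ne_zero _ h2z hd
      · norm_num at hd
    · exact h
  have hc1 : Tendsto (fun w => fseq (m + 2) w * ((2 * w) ^ (m + 2) - 1)) (𝓝[≠] z)
      (𝓝 (fseq (m + 2) z * ((2 * z) ^ (m + 2) - 1))) := by
    apply Tendsto.mono_left _ nhdsWithin_le_nhds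
    exact (hA.continuousAt.mul hpA.continuousAt).tendsto
  rw [h0, mul_zero] at hc1
  have hc2 : Tendsto (fun w => fseq (m + 2) w * ((2 * w) ^ (m + 2) - 1)) (𝓝[≠] z)
      (𝓝 1) := by
    apply Tendsto.congr' _ tendsto_const_nhds
    filter_upwards [hne] with w hw
    rw [fseq]
    exact (inv_mul_cancel₀ hw).symm
  exact one_ne_zero (tendsto_nhds_unique hc2 hc1)

lemma mcast_ne (m k : ℕ) (hk : k ≠ 0) : ((m : ℂ) + (k : ℂ)) ≠ 0 := by
  have e : ((m : ℂ) + (k : ℂ)) = ((m + k : ℕ) : ℂ) := by push_cast; ring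
  rw [e]; exact Nat.cast_ne_zero.mpr (by omega)

lemma two_zseq (m : ℕ) :
    2 * zseq (m + 2) =
      ((((m + 2 : ℕ) : ℂ) - 1) / (((m + 2 : ℕ) : ℂ) + 1)) ^ ((((m + 2 : ℕ) : ℂ))⁻¹) *
        Complex.exp (Real.pi * Complex.I / ((m + 2 : ℕ) : ℂ)) := by
  rw [zseq, one_div]
  ring

lemma zseq_pow (m : ℕ) :
    (2 * zseq (m + 2)) ^ (m + 2) = -((((m : ℂ) + 1)) / (((m : ℂ)) + 3)) := by
  rw [two_zseq, mul_pow]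
  have hn0 : (m + 2 : ℕ) ≠ 0 := by omega
  have hc : ((((m + 2 : ℕ) : ℂ) - 1) / (((m + 2 : ℕ) : ℂ) + 1)) ≠ 0 := by
    apply div_ne_zero
    · have e : (((m + 2 : ℕ) : ℂ) - 1) = ((m : ℂ) + 1) := by push_cast; ring
      rw [e]; exact_mod_cast mcast_ne m 1 one_ne_zero
    · have e : (((m + 2 : ℕ) : ℂ) + 1) = ((m : ℂ) + 3) := by push_cast; ring
      rw [e]; exact_mod_cast mcast_ne m 3 (by norm_num)
  rw [Complex.cpow_nat_inv_pow _ hn0]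
  have hexp : (Complex.exp (Real.pi * Complex.I / ((m + 2 : ℕ) : ℂ))) ^ (m + 2) = -1 := by
    rw [← Complex.exp_nat_mul]
    have hne : ((m : ℂ) + 2) ≠ 0 := by exact_mod_cast mcast_ne m 2 (by norm_num)
    have : ((m + 2 : ℕ) : ℂ) * (Real.pi * Complex.I / ((m + 2 : ℕ) : ℂ)) =
        Real.pi * Complex.I := by
      push_cast
      field_simp
    rw [this, Complex.exp_pi_mul_I]
  rw [hexp]
  have e1 : (((m + 2 : ℕ) : ℂ) - 1) = ((m : ℂ) + 1) := by push_cast; ring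
  have e2 : (((m + 2 : ℕ) : ℂ) + 1) = ((m : ℂ) + 3) := by push_cast; ring
  rw [e1, e2]
  ring

lemma zseq_p_ne (m : ℕ) : (2 * zseq (m + 2)) ^ (m + 2) - 1 ≠ 0 := by
  rw [zseq_pow]
  intro h
  rw [sub_eq_zero] at h
  have h3 : ((m : ℂ) + 3) ≠ 0 := by exact_mod_cast mcast_ne m 3 (by norm_num)
  rw [← neg_div, div_eq_iff h3] at h
  have : ((m : ℂ)) * 2 + 4 = 0 := by linear_combination -h
  have e : ((m : ℂ)) * 2 + 4 = ((m * 2 + 4 : ℕ) : ℂ) := by push_cast; ring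
  rw [e] at this
  exact Nat.cast_ne_zero.mpr (by omega) this

lemma deriv2_zseq (m : ℕ) : deriv (deriv (fseq (m + 2))) (zseq (m + 2)) = 0 := by
  rw [deriv2_fseq' (zseq_p_ne m), d2f, div_eq_zero_iff]
  left
  have hb : ((m : ℂ) + 3) * (2 * zseq (m + 2)) ^ (m + 2) + ((m : ℂ) + 1) = 0 := by
    rw [zseq_pow]
    have h3 : ((m : ℂ) + 3) ≠ 0 := by exact_mod_cast mcast_ne m 3 (by norm_num)
    field_simp
    ring
  linear_combination (4 * ((m : ℂ) + 2) * (2 * zseq (m + 2)) ^ m *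
    ((2 * zseq (m + 2)) ^ (m + 2) - 1)) * hb

end SchwAux
namespace SchwAux

lemma creal_pos (m : ℕ) : 0 < (((m : ℝ) + 1) / ((m : ℝ) + 3)) := by positivity

lemma creal_lt_one (m : ℕ) : (((m : ℝ) + 1) / ((m : ℝ) + 3)) < 1 := by
  rw [div_lt_one (by positivity)]
  linarith

lemma norm_two_zseq (m : ℕ) :
    ‖2 * zseq (m + 2)‖ = (((m : ℝ) + 1) / ((m : ℝ) + 3)) ^ (((m : ℝ) + 2)⁻¹) := by
  rw [two_zseq]
  rw [norm_mul]
  have e1 : ((((m + 2 : ℕ) : ℂ) - 1) / (((m + 2 : ℕ) : ℂ) + 1)) =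
      (((((m : ℝ) + 1) / ((m : ℝ) + 3)) : ℝ) : ℂ) := by push_cast; ring
  have e2 : (Real.pi * Complex.I / ((m + 2 : ℕ) : ℂ)) =
      (((Real.pi / ((m : ℝ) + 2)) : ℝ) : ℂ) * Complex.I := by push_cast; ring
  rw [e1, e2]
  rw [Complex.norm_exp_ofReal_mul_I,
    Complex.norm_cpow_eq_rpow_re_of_pos (creal_pos m)]
  have e3 : ((((m + 2 : ℕ) : ℂ))⁻¹).re = ((m : ℝ) + 2)⁻¹ := by
    have : (((m + 2 : ℕ) : ℂ))⁻¹ = ((((m : ℝ) + 2)⁻¹ : ℝ) : ℂ) := by push_cast; ring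
    rw [this, Complex.ofReal_re]
  rw [e3, mul_one]

lemma norm_two_zseq_lt_one (m : ℕ) : ‖2 * zseq (m + 2)‖ < 1 := by
  rw [norm_two_zseq]
  exact Real.rpow_lt_one (le_of_lt (creal_pos m)) (creal_lt_one m) (by positivity)

lemma zseq_ne_zero (m : ℕ) : zseq (m + 2) ≠ 0 := by
  intro h
  have h2 : ‖2 * zseq (m + 2)‖ = 0 := by rw [h]; simp
  rw [norm_two_zseq] at h2
  have : (0 : ℝ) < (((m : ℝ) + 1) / ((m : ℝ) + 3)) ^ (((m : ℝ) + 2)⁻¹) :=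
    Real.rpow_pos_of_pos (creal_pos m) _
  linarith

lemma tendsto_inv_nat : Tendsto (fun n : ℕ => ((n : ℂ))⁻¹) atTop (𝓝 0) := by
  have h : Tendsto (fun n : ℕ => ((n : ℝ))⁻¹) atTop (𝓝 0) :=
    tendsto_inv_atTop_zero.comp tendsto_natCast_atTop_atTop
  have h2 := (Complex.continuous_ofReal.tendsto 0).comp h
  rw [show ((0 : ℂ)) = ((0 : ℝ) : ℂ) by norm_num]
  apply (h2 : Tendsto (fun n : ℕ => (((((n : ℝ))⁻¹ : ℝ)) : ℂ)) atTop (𝓝 ((0:ℝ):ℂ))).congr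
  intro n
  simp only [Function.comp]
  push_cast
  ring

lemma tendsto_zseq : Tendsto zseq atTop (𝓝 (1 / 2 : ℂ)) := by
  have hc : Tendsto (fun n : ℕ => (((n : ℂ)) - 1) / (((n : ℂ)) + 1)) atTop (𝓝 1) := by
    have h1 : Tendsto (fun n : ℕ => 1 - ((n : ℂ))⁻¹) atTop (𝓝 1) := by
      simpa using tendsto_const_nhds.sub tendsto_inv_nat
    have h2 : Tendsto (fun n : ℕ => 1 + ((n : ℂ))⁻¹) atTop (𝓝 1) := by
      simpa using tendsto_const_nhds.add tendsto_inv_nat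
    have h3 : Tendsto (fun n : ℕ => (1 - ((n : ℂ))⁻¹) / (1 + ((n : ℂ))⁻¹)) atTop (𝓝 1) := by
      simpa [Pi.div_def] using h1.div h2 one_ne_zero
    apply h3.congr'
    filter_upwards [eventually_ge_atTop 1] with n hn
    have hn0 : ((n : ℂ)) ≠ 0 := Nat.cast_ne_zero.mpr (by omega)
    field_simp
  have he : Tendsto (fun n : ℕ => Complex.exp (Real.pi * Complex.I / (n : ℂ))) atTop (𝓝 1) := by
    have harg : Tendsto (fun n : ℕ => Real.pi * Complex.I / (n : ℂ)) atTop (𝓝 0) := by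
      have := tendsto_inv_nat.const_mul (Real.pi * Complex.I)
      simpa [div_eq_mul_inv] using this
    have := (Complex.continuous_exp.tendsto 0).comp harg
    simpa [Function.comp_def] using this
  have hpow : Tendsto (fun n : ℕ => ((((n : ℂ)) - 1) / (((n : ℂ)) + 1)) ^ ((1 : ℂ) / (n : ℂ)))
      atTop (𝓝 1) := by
    have hcont : ContinuousAt (fun p : ℂ × ℂ => p.1 ^ p.2) (1, 0) :=
      continuousAt_cpow (by simp [Complex.slitPlane])
    have hpair : Tendsto (fun n : ℕ => ((((n : ℂ)) - 1) / (((n : ℂ)) + 1), (1 : ℂ) / (n : ℂ)))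
        atTop (𝓝 ((1 : ℂ), (0 : ℂ))) := by
      apply Tendsto.prodMk_nhds hc
      simpa [one_div] using tendsto_inv_nat
    have := hcont.tendsto.comp hpair
    simpa [Function.comp_def] using this
  have hval : ((1 / 2 : ℂ) * 1 * 1) = 1 / 2 := by norm_num
  rw [← hval]
  exact (tendsto_const_nhds.mul hpow).mul he

end SchwAux
namespace SchwAux

lemma norm_m_add (m k : ℕ) : ‖((m : ℂ) + (k : ℂ))‖ = (m : ℝ) + (k : ℝ) := by
  rw [show ((m : ℂ) + (k : ℂ)) = ((m + k : ℕ) : ℂ) by push_cast; ring]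
  rw [Complex.norm_natCast]
  push_cast
  ring

lemma growth {y : ℂ} (hy0 : y ≠ 0) (hy : ‖2 * y‖ < 1) :
    Tendsto (fun m : ℕ => ‖ldd (fseq (m + 2)) y‖) atTop atTop := by
  have h2y : (2 : ℂ) * y ≠ 0 := by simp [hy0]
  have hr0 : 0 < ‖2 * y‖ := norm_pos_iff.mpr h2y
  have hpk : ∀ m : ℕ, (2 * y) ^ (m + 2) - 1 ≠ 0 := by
    intro m h
    rw [sub_eq_zero] at h
    have h1 : ‖(2 * y) ^ (m + 2)‖ = 1 := by rw [h]; simp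
    rw [norm_pow] at h1
    have h2 : ‖2 * y‖ ^ (m + 2) < 1 := pow_lt_one₀ (norm_nonneg _) hy (by omega)
    linarith
  have h0 : Tendsto (fun m : ℕ => ((m : ℝ) + 3) * ‖2 * y‖ ^ (m + 2)) atTop (𝓝 0) := by
    have ha : Tendsto (fun n : ℕ => (n : ℝ) * ‖2 * y‖ ^ n) atTop (𝓝 0) :=
      tendsto_self_mul_const_pow_of_lt_one (le_of_lt hr0) hy
    have hb : Tendsto (fun n : ℕ => ‖2 * y‖ ^ n) atTop (𝓝 0) :=
      tendsto_pow_atTop_nhds_zero_of_lt_one (le_of_lt hr0) hy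
    have hsum := (ha.comp (tendsto_add_atTop_nat 2)).add (hb.comp (tendsto_add_atTop_nat 2))
    rw [add_zero] at hsum
    refine Tendsto.congr ?_ hsum
    intro m
    simp only [Function.comp]
    push_cast
    ring
  have hev : ∀ᶠ m : ℕ in atTop, ((m : ℝ) + 3) * ‖2 * y‖ ^ (m + 2) ≤ 1 / 2 := by
    filter_upwards [h0.eventually_lt_const (by norm_num : (0 : ℝ) < 1 / 2)] with m hm
    exact le_of_lt hm
  apply tendsto_atTop_mono' atTop ?_ tendsto_natCast_atTop_atTop
  filter_upwards [hev] with m hm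
  rw [ldd_eq_L (hpk m) hy0, L, norm_div]
  have hvn : ‖(2 * y) ^ (m + 2)‖ = ‖2 * y‖ ^ (m + 2) := norm_pow _ _
  have hv1 : ‖2 * y‖ ^ (m + 2) ≤ 1 := le_of_lt (pow_lt_one₀ (norm_nonneg _) hy (by omega))
  -- numerator lower bound
  have hnorm1 : ‖((m : ℂ) + 1)‖ = (m : ℝ) + 1 := by exact_mod_cast norm_m_add m 1
  have hnorm3 : ‖((m : ℂ) + 3) * (2 * y) ^ (m + 2)‖ = ((m : ℝ) + 3) * ‖2 * y‖ ^ (m + 2) := by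
    rw [norm_mul, hvn]
    congr 1
    exact_mod_cast norm_m_add m 3
  have hnum_lb : 2 * (m : ℝ) + 1 ≤ ‖(-2 : ℂ) * (((m : ℂ) + 3) * (2 * y) ^ (m + 2) + ((m : ℂ) + 1))‖ := by
    rw [norm_mul]
    have hn2 : ‖(-2 : ℂ)‖ = 2 := by simp
    rw [hn2]
    have htri : ‖((m : ℂ) + 1)‖ ≤ ‖(((m : ℂ) + 3) * (2 * y) ^ (m + 2) + ((m : ℂ) + 1))‖ +
        ‖((m : ℂ) + 3) * (2 * y) ^ (m + 2)‖ := by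
      have := norm_sub_le ((((m : ℂ) + 3) * (2 * y) ^ (m + 2) + ((m : ℂ) + 1)))
        (((m : ℂ) + 3) * (2 * y) ^ (m + 2))
      simpa using this
    rw [hnorm1, hnorm3] at htri
    nlinarith [hm, norm_nonneg ((((m : ℂ) + 3) * (2 * y) ^ (m + 2) + ((m : ℂ) + 1)))]
  -- denominator bounds
  have hden_ub : ‖(2 * y) * ((2 * y) ^ (m + 2) - 1)‖ ≤ 2 := by
    rw [norm_mul]
    have h1 : ‖(2 * y) ^ (m + 2) - 1‖ ≤ 2 := by
      have := norm_sub_le ((2 * y) ^ (m + 2)) 1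
      rw [hvn] at this
      simp only [norm_one] at this
      linarith
    nlinarith [norm_nonneg ((2 * y) ^ (m + 2) - 1), hr0]
  have hden_pos : 0 < ‖(2 * y) * ((2 * y) ^ (m + 2) - 1)‖ :=
    norm_pos_iff.mpr (mul_ne_zero h2y (hpk m))
  calc (m : ℝ) ≤ (2 * (m : ℝ) + 1) / 2 := by linarith
    _ ≤ ‖(-2 : ℂ) * (((m : ℂ) + 3) * (2 * y) ^ (m + 2) + ((m : ℂ) + 1))‖ / 2 := by linarith
    _ ≤ ‖(-2 : ℂ) * (((m : ℂ) + 3) * (2 * y) ^ (m + 2) + ((m : ℂ) + 1))‖ /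
        ‖(2 * y) * ((2 * y) ^ (m + 2) - 1)‖ := by
      apply div_le_div_of_nonneg_left (norm_nonneg _) hden_pos hden_ub

end SchwAux
namespace SchwAux

lemma sphDist_coe_none (z : ℂ) :
    sphDist (z : OnePoint ℂ) (none : OnePoint ℂ) = 1 / Real.sqrt (1 + ‖z‖ ^ 2) := rfl

lemma sphDist_coe_coe (z w : ℂ) :
    sphDist (z : OnePoint ℂ) (w : OnePoint ℂ) =
      ‖z - w‖ / (Real.sqrt (1 + ‖z‖ ^ 2) * Real.sqrt (1 + ‖w‖ ^ 2)) := rfl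

lemma sqrt_one_add_sq_le (b : ℝ) (hb : 0 ≤ b) : Real.sqrt (1 + b ^ 2) ≤ 1 + b := by
  rw [show (1 + b : ℝ) = Real.sqrt ((1 + b) ^ 2) from (Real.sqrt_sq (by positivity)).symm]
  apply Real.sqrt_le_sqrt
  nlinarith

lemma sph_contra (gy : OnePoint ℂ) (w : ℂ) (hw : 100 ≤ ‖w‖)
    (h1 : sphDist ((0 : ℂ) : OnePoint ℂ) gy < 1 / 10)
    (h2 : sphDist ((w : ℂ) : OnePoint ℂ) gy < 1 / 10) : False := by
  match gy with
  | none =>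
    rw [sphDist_coe_none] at h1
    simp only [norm_zero] at h1
    norm_num at h1
  | some v =>
    rw [show (some v : OnePoint ℂ) = (v : OnePoint ℂ) from rfl] at h1 h2
    rw [sphDist_coe_coe] at h1 h2
    have hb0 : (0 : ℝ) ≤ ‖v‖ := norm_nonneg v
    have ha0 : (0 : ℝ) ≤ ‖w‖ := norm_nonneg w
    have hsb : Real.sqrt (1 + ‖v‖ ^ 2) ≤ 1 + ‖v‖ := sqrt_one_add_sq_le _ hb0
    have hsa : Real.sqrt (1 + ‖w‖ ^ 2) ≤ 1 + ‖w‖ := sqrt_one_add_sq_le _ ha0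
    have hsb_pos : 0 < Real.sqrt (1 + ‖v‖ ^ 2) := Real.sqrt_pos.mpr (by positivity)
    have hsa_pos : 0 < Real.sqrt (1 + ‖w‖ ^ 2) := Real.sqrt_pos.mpr (by positivity)
    -- from h1 : ‖v‖ is small
    simp only [norm_zero, zero_sub, norm_neg] at h1
    have h1' : ‖v‖ < (1 / 10) * (Real.sqrt (1 + (0:ℝ) ^ 2) * Real.sqrt (1 + ‖v‖ ^ 2)) := by
      rw [← div_lt_iff₀ (by positivity)] at *
      convert h1 using 2 <;> norm_num
    have hs0 : Real.sqrt (1 + (0:ℝ) ^ 2) = 1 := by norm_num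
    rw [hs0, one_mul] at h1'
    have hv_small : ‖v‖ ≤ 1 / 9 := by nlinarith
    -- from h2 : contradiction
    have h2' : ‖w - v‖ < (1 / 10) * (Real.sqrt (1 + ‖w‖ ^ 2) * Real.sqrt (1 + ‖v‖ ^ 2)) := by
      rw [div_lt_iff₀ (by positivity)] at h2
      linarith
    have hwv : ‖w‖ - ‖v‖ ≤ ‖w - v‖ := norm_sub_norm_le w v
    nlinarith [hsa_pos, hsb_pos]

lemma not_normal (U : Set ℂ) (hU : U ∈ 𝓝 (1 / 2 : ℂ)) :
    ¬ ∃ φ : ℕ → ℕ, StrictMono φ ∧ ∃ g : ℂ → OnePoint ℂ,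
      TendstoLocUnifSph (fun m => ldd (fseq (φ m + 2))) g (U ∩ unitDisk) := by
  rintro ⟨φ, hφ, g, hconv⟩
  have hhalf : (1 / 2 : ℂ) ∈ U ∩ unitDisk := by
    refine ⟨mem_of_mem_nhds hU, ?_⟩
    simp only [unitDisk, Metric.mem_ball, dist_zero_right]
    rw [show ‖(1 / 2 : ℂ)‖ = 1 / 2 by norm_num]
    norm_num
  obtain ⟨t, ht, hev⟩ := hconv (1 / 10) (by norm_num) (1 / 2) hhalf
  obtain ⟨N, hN⟩ := eventually_atTop.mp hev
  rw [mem_nhdsWithin] at ht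
  obtain ⟨V, hVopen, hV12, hVsub⟩ := ht
  have htend : Tendsto (fun m : ℕ => zseq (φ m + 2)) atTop (𝓝 (1 / 2 : ℂ)) :=
    tendsto_zseq.comp ((tendsto_add_atTop_nat 2).comp hφ.tendsto_atTop)
  have hevV : ∀ᶠ m : ℕ in atTop, zseq (φ m + 2) ∈ V :=
    htend (hVopen.mem_nhds hV12)
  have hevU : ∀ᶠ m : ℕ in atTop, zseq (φ m + 2) ∈ U := htend hU
  obtain ⟨m₀, hm₀⟩ := (hevV.and (hevU.and (eventually_ge_atTop N))).exists
  obtain ⟨hm₀V, hm₀U, hm₀N⟩ := hm₀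
  set y₀ := zseq (φ m₀ + 2) with hy₀
  have hy₀disk : y₀ ∈ unitDisk := by
    simp only [unitDisk, Metric.mem_ball, dist_zero_right]
    have h2 : ‖2 * y₀‖ < 1 := norm_two_zseq_lt_one (φ m₀)
    rw [norm_mul] at h2
    have : ‖(2 : ℂ)‖ = 2 := by norm_num
    rw [this] at h2
    linarith
  have hy₀t : y₀ ∈ t := hVsub ⟨hm₀V, hm₀U, hy₀disk⟩
  have h1 := hN m₀ hm₀N y₀ hy₀t
  simp only at h1
  have hzero : ldd (fseq (φ m₀ + 2)) y₀ = 0 := by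
    rw [ldd, deriv2_zseq (φ m₀), zero_div]
  rw [hzero] at h1
  have hgrow : Tendsto (fun k : ℕ => ‖ldd (fseq (φ k + 2)) y₀‖) atTop atTop := by
    have hbase : Tendsto (fun m : ℕ => ‖ldd (fseq (m + 2)) y₀‖) atTop atTop :=
      growth (zseq_ne_zero (φ m₀)) (norm_two_zseq_lt_one (φ m₀))
    exact hbase.comp hφ.tendsto_atTop
  obtain ⟨m₁, hm₁big, hm₁N⟩ := ((hgrow.eventually_ge_atTop 100).and (eventually_ge_atTop N)).exists
  have h2 := hN m₁ hm₁N y₀ hy₀t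
  exact sph_contra (g y₀) _ hm₁big h1 h2

end SchwAux
namespace SchwAux

lemma analyticAt_p (m : ℕ) (z : ℂ) :
    AnalyticAt ℂ (fun w : ℂ => (2 * w) ^ (m + 2) - 1) z := by
  apply AnalyticAt.sub _ analyticAt_const
  exact ((analyticAt_const.mul analyticAt_id).pow (m + 2))

lemma part2 (m : ℕ) : ∃ h : MeromorphicAt (fseq (m + 2)) (1 / 2 : ℂ),
    meromorphicOrderAt (fseq (m + 2)) (1 / 2 : ℂ) = ((-1 : ℤ) : WithTop ℤ) := by
  have hpA := analyticAt_p m (1 / 2 : ℂ)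
  have hmero : MeromorphicAt (fseq (m + 2)) (1 / 2 : ℂ) := hpA.meromorphicAt.inv
  refine ⟨hmero, ?_⟩
  rw [meromorphicOrderAt_eq_int_iff hmero]
  have hqA : AnalyticAt ℂ (fun z : ℂ => 2 * ∑ i ∈ Finset.range (m + 2), (2 * z) ^ i)
      (1 / 2 : ℂ) := by
    apply AnalyticAt.mul analyticAt_const
    exact Finset.analyticAt_fun_sum _ (fun i _ => ((analyticAt_const.mul analyticAt_id).pow i))
  have hq0 : (2 : ℂ) * ∑ i ∈ Finset.range (m + 2), (2 * (1 / 2 : ℂ)) ^ i ≠ 0 := by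
    have : (2 : ℂ) * (1 / 2 : ℂ) = 1 := by norm_num
    rw [this]
    simp only [one_pow, Finset.sum_const, Finset.card_range, nsmul_eq_mul, mul_one]
    intro h
    rw [mul_eq_zero] at h
    rcases h with h | h
    · norm_num at h
    · exact Nat.cast_ne_zero.mpr (by omega) h
  refine ⟨fun z => (2 * ∑ i ∈ Finset.range (m + 2), (2 * z) ^ i)⁻¹, hqA.inv hq0,
    inv_ne_zero hq0, ?_⟩
  apply Filter.Eventually.filter_mono nhdsWithin_le_nhds
  apply Filter.Eventually.of_forall
  intro z
  have hfact : (z - 1 / 2) * (2 * ∑ i ∈ Finset.range (m + 2), (2 * z) ^ i) =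
      (2 * z) ^ (m + 2) - 1 := by
    have h := geom_sum_mul (2 * z) (m + 2)
    linear_combination h
  rw [fseq]
  rw [zpow_neg, zpow_one, smul_eq_mul, ← mul_inv, hfact]

end SchwAux

/-- There is a sequence of meromorphic functions on `𝔻` whose classical Schwarzians
omit `0`, while `(f_n''/f_n')_n` is not normal at `1/2`: the functions
`f_n(z) = ((2z)^n - 1)⁻¹` satisfy `S_2(f_n)(z) = (1 - n²)/(2z²) ≠ 0`, have a simple
pole at `1/2`, satisfy `f_n''(z_n) = 0` with `z_n → 1/2`, and `(f_n''/f_n')_n`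
is not normal at `1/2`. -/
theorem schwarzian_omits_zero_meromorphic_counterexample :
    (∀ n : ℕ, 2 ≤ n → ∀ z ∈ unitDisk, AnalyticAt ℂ (fseq n) z → deriv (fseq n) z ≠ 0 →
        Sk 2 (fseq n) z = (1 - (n : ℂ) ^ 2) / (2 * z ^ 2) ∧ Sk 2 (fseq n) z ≠ 0) ∧
    (∀ n : ℕ, 2 ≤ n →
        ∃ _h : MeromorphicAt (fseq n) (1 / 2 : ℂ), meromorphicOrderAt (fseq n) (1 / 2 : ℂ) = ((-1 : ℤ) : WithTop ℤ)) ∧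
    (∀ n : ℕ, 2 ≤ n → deriv (deriv (fseq n)) (zseq n) = 0) ∧
    Tendsto zseq atTop (𝓝 (1 / 2 : ℂ)) ∧
    (∀ U ∈ 𝓝 (1 / 2 : ℂ), ¬ ∃ φ : ℕ → ℕ, StrictMono φ ∧ ∃ g : ℂ → OnePoint ℂ,
        TendstoLocUnifSph (fun m => ldd (fseq (φ m + 2))) g (U ∩ unitDisk)) := by
  refine ⟨?_, ?_, ?_, SchwAux.tendsto_zseq, SchwAux.not_normal⟩
  · intro n hn z _hz hA hd
    obtain ⟨m, rfl⟩ : ∃ m, n = m + 2 := ⟨n - 2, by omega⟩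
    have hp := SchwAux.p_ne_of_analytic hA
    have hz0 : z ≠ 0 := by
      intro h
      apply hd
      rw [SchwAux.deriv_fseq hp, SchwAux.df, h]
      simp
    constructor
    · rw [SchwAux.Sk_eq hp hz0]
      push_cast
      ring
    · rw [SchwAux.Sk_eq hp hz0]
      apply div_ne_zero
      · intro h
        rw [sub_eq_zero] at h
        have h2 : ((1 : ℕ) : ℂ) = (((m + 2) ^ 2 : ℕ) : ℂ) := by push_cast; linear_combination h
        have h3 : (1 : ℕ) = (m + 2) ^ 2 := Nat.cast_injective h2
        nlinarith [h3]
      · exact mul_ne_zero two_ne_zero (pow_ne_zero 2 hz0)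
  · intro n hn
    obtain ⟨m, rfl⟩ : ∃ m, n = m + 2 := ⟨n - 2, by omega⟩
    exact SchwAux.part2 m
  · intro n hn
    obtain ⟨m, rfl⟩ : ∃ m, n = m + 2 := ⟨n - 2, by omega⟩
    exact SchwAux.deriv2_zseq m
end
end

section
/- For every c ∈ ℂ with c ≠ 0, the entire locally univalent function f(z) = exp(e^{cz}/c) satisfies S_2(f)(z) = −e^{2cz}/2 − c²/2 for all z ∈ ℂ. Consequently, for every w ∈ ℂ ∖ {0} there exists a non-constant entire function f with S_2(f)(z) ≠ w and S_2(f)(z) ≠ ∞ for all z ∈ ℂ, which is not of the form f(z) = a·e^{bz} + d for any a, b, d ∈ ℂ; hence in the rigidity theorem for entire functions with S_k(f) ≠ 0, the exceptional value 0 cannot be replaced by any other value. -/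
open Complex Filter Set Metric Topology

noncomputable section

lemma aux_hasDerivAt (c z : ℂ) (hc : c ≠ 0) :
    HasDerivAt (fun w => Complex.exp (Complex.exp (c*w)/c))
      (Complex.exp (c*z + Complex.exp (c*z)/c)) z := by
  have h1 : HasDerivAt (fun w : ℂ => c * w) c z := by
    simpa using (hasDerivAt_id z).const_mul c
  have h3 := ((h1.cexp).div_const c).cexp
  refine h3.congr_deriv ?_
  rw [Complex.exp_add]
  field_simp

lemma aux_deriv (c : ℂ) (hc : c ≠ 0) :
    deriv (fun w => Complex.exp (Complex.exp (c*w)/c))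
      = fun z => Complex.exp (c*z + Complex.exp (c*z)/c) := by
  funext z; exact (aux_hasDerivAt c z hc).deriv

lemma aux_hasDerivAt2 (c z : ℂ) (hc : c ≠ 0) :
    HasDerivAt (fun w => Complex.exp (c*w + Complex.exp (c*w)/c))
      ((c + Complex.exp (c*z)) * Complex.exp (c*z + Complex.exp (c*z)/c)) z := by
  have h1 : HasDerivAt (fun w : ℂ => c * w) c z := by
    simpa using (hasDerivAt_id z).const_mul c
  have h3 := (h1.add ((h1.cexp).div_const c)).cexp
  refine h3.congr_deriv ?_
  simp only [Pi.add_apply]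
  field_simp

lemma aux_ldd (c : ℂ) (hc : c ≠ 0) :
    ldd (fun w => Complex.exp (Complex.exp (c*w)/c)) = fun z => c + Complex.exp (c*z) := by
  funext z
  unfold ldd
  rw [aux_deriv c hc]
  rw [(aux_hasDerivAt2 c z hc).deriv]
  rw [mul_div_assoc, div_self (Complex.exp_ne_zero _), mul_one]

lemma aux_Sk (c : ℂ) (hc : c ≠ 0) (z : ℂ) :
    Sk 2 (fun w => Complex.exp (Complex.exp (c * w) / c)) z
      = -Complex.exp (2 * c * z) / 2 - c ^ 2 / 2 := by
  have hldd := aux_ldd c hc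
  show SRec 2 (fun w => Complex.exp (Complex.exp (c * w) / c)) 1 z = _
  have hd : deriv (ldd (fun w => Complex.exp (Complex.exp (c*w)/c))) z
      = c * Complex.exp (c*z) := by
    rw [hldd]
    have h1 : HasDerivAt (fun w : ℂ => c * w) c z := by
      simpa using (hasDerivAt_id z).const_mul c
    have h2 := h1.cexp.const_add c
    rw [h2.deriv]; ring
  show deriv (ldd _) z - (1 / (2:ℕ) : ℂ) * ldd _ z * ldd _ z = _
  rw [hd, hldd]
  have he : Complex.exp (2*c*z) = Complex.exp (c*z) * Complex.exp (c*z) := by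
    rw [← Complex.exp_add]; ring_nf
  rw [he]
  push_cast
  ring

lemma aux_hasDerivAt_abd (a b d z : ℂ) :
    HasDerivAt (fun z => a * Complex.exp (b*z) + d) (a * b * Complex.exp (b*z)) z := by
  have h1 : HasDerivAt (fun w : ℂ => b * w) b z := by
    simpa using (hasDerivAt_id z).const_mul b
  have h2 := (h1.cexp.const_mul a).add_const d
  refine h2.congr_deriv ?_
  ring

/-- For every `c ≠ 0`, the entire locally univalent function `f(z) = exp(e^{cz}/c)`
satisfies `S_2(f)(z) = -e^{2cz}/2 - c²/2`. Consequently, for every `w ≠ 0` there is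
a non-constant entire function `f` with `S_2(f)(z) ≠ w` and `S_2(f)(z) ≠ ∞`
(i.e. `f'` has no zeros) for all `z`, which is not of the form `a·e^{bz} + d`;
hence the exceptional value `0` in the rigidity theorem cannot be replaced by any
other value. -/
theorem schwarzian_of_exp_exp :
    (∀ c : ℂ, c ≠ 0 → ∀ z : ℂ,
        Sk 2 (fun w => Complex.exp (Complex.exp (c * w) / c)) z
          = -Complex.exp (2 * c * z) / 2 - c ^ 2 / 2) ∧
    ∀ w : ℂ, w ≠ 0 → ∃ f : ℂ → ℂ, Differentiable ℂ f ∧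
      (¬ ∃ c : ℂ, f = fun _ => c) ∧
      (∀ z : ℂ, deriv f z ≠ 0) ∧
      (∀ z : ℂ, Sk 2 f z ≠ w) ∧
      ¬ ∃ a b d : ℂ, ∀ z : ℂ, f z = a * Complex.exp (b * z) + d := by
  constructor
  · exact fun c hc z => aux_Sk c hc z
  · intro w hw
    have hw2 : (-2 : ℂ) * w ≠ 0 := by
      intro h; apply hw; simpa using h
    set c : ℂ := Complex.exp (Complex.log (-2*w) / 2) with hcdef
    have hc : c ≠ 0 := Complex.exp_ne_zero _
    have hc2 : c ^ 2 = -2 * w := by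
      rw [sq, hcdef, ← Complex.exp_add,
        show Complex.log (-2*w)/2 + Complex.log (-2*w)/2 = Complex.log (-2*w) by ring,
        Complex.exp_log hw2]
    refine ⟨fun z => Complex.exp (Complex.exp (c*z)/c), ?_, ?_, ?_, ?_, ?_⟩
    · intro z
      exact ((aux_hasDerivAt c z hc).differentiableAt)
    · rintro ⟨k, hk⟩
      have h0 : deriv (fun _ : ℂ => k) (0:ℂ) = 0 := deriv_const 0 k
      rw [← hk, aux_deriv c hc] at h0
      exact Complex.exp_ne_zero _ h0
    · intro z
      rw [aux_deriv c hc]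
      exact Complex.exp_ne_zero _
    · intro z h
      rw [aux_Sk c hc z, hc2] at h
      have : Complex.exp (2*c*z) = 0 := by linear_combination (-2 : ℂ) * h
      exact Complex.exp_ne_zero _ this
    · rintro ⟨a, b, d, habd⟩
      have hfe : (fun z => Complex.exp (Complex.exp (c*z)/c))
          = fun z => a * Complex.exp (b*z) + d := funext habd
      have hdR : deriv (fun z => a * Complex.exp (b*z) + d)
          = fun z => a*b*Complex.exp (b*z) :=
        funext fun z => (aux_hasDerivAt_abd a b d z).deriv
      have h1 : ∀ z, Complex.exp (c*z + Complex.exp (c*z)/c) = a*b*Complex.exp (b*z) := by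
        intro z
        have := congrFun (aux_deriv c hc) z
        rw [hfe, hdR] at this
        simpa using this.symm
      have hab : a * b ≠ 0 := by
        intro h
        have h2 := h1 0
        rw [h, zero_mul] at h2
        exact Complex.exp_ne_zero _ h2
      have hldd2 : ∀ z, c + Complex.exp (c*z) = b := by
        intro z
        have hL := congrFun (aux_ldd c hc) z
        rw [hfe] at hL
        rw [← hL]
        unfold ldd
        rw [hdR]
        have hd2 : deriv (fun z => a*b*Complex.exp (b*z)) z = a*b*b*Complex.exp (b*z) := by
          have h1' : HasDerivAt (fun w : ℂ => b * w) b z := by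
            simpa using (hasDerivAt_id z).const_mul b
          have h2' := h1'.cexp.const_mul (a*b)
          rw [h2'.deriv]; ring
        rw [hd2]
        have hne : a*b*Complex.exp (b*z) ≠ 0 := mul_ne_zero hab (Complex.exp_ne_zero _)
        rw [show a*b*b*Complex.exp (b*z) = b*(a*b*Complex.exp (b*z)) by ring,
          mul_div_assoc, div_self hne, mul_one]
      have e0 : c + 1 = b := by simpa using hldd2 0
      have e1 : c + 2 = b := by
        have := hldd2 (Complex.log 2 / c)
        rw [mul_div_cancel₀ _ hc, Complex.exp_log (by norm_num)] at this
        exact this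
      have : (1 : ℂ) = 2 := by
        have := e0.trans e1.symm
        exact add_left_cancel this
      norm_num at this
end
end
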